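/- arXiv:nlin/0403001 — 3 statements merged into one kernel-verified Lean document; each statement's English description precedes it below -/
import Mathlib

section
/- Let B₁, B₂ be the 2×2 matrices B₁(λ) = λ²·diag(1,-1) + λ·[[0,-2q],[2r,0]] + diag(2qr,-2qr) and B₂(λ) = λ⁴·diag(1,-1) + λ³·[[0,-2q],[2r,0]] + λ²·diag(2qr,-2qr) + λ·[[0,-q'],[-r',0]] + diag(q'r - qr' - 2q²r², -(q'r - qr' - 2q²r²)), with ' = ∂/∂x. Then the zero-curvature equation ∂B₁/∂t - ∂B₂/∂x + [B₁, B₂] = 0 holds for all λ if and only if q, r satisfy the ∂NLS system q_t = (1/2)q_xx - 2q²r_x - 4q³r², r_t = -(1/2)r_xx - 2r²q_x + 4r³q². -/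
/-- Partial derivative in the first (space) variable. -/
noncomputable def pdx (f : ℝ → ℝ → ℂ) (x t : ℝ) : ℂ := deriv (fun u => f u t) x

/-- Partial derivative in the second (time) variable. -/
noncomputable def pdt (f : ℝ → ℝ → ℂ) (x t : ℝ) : ℂ := deriv (fun u => f x u) t

/-- Entrywise partial derivative in `x` of a matrix-valued function. -/
noncomputable def mpdx (F : ℝ → ℝ → Matrix (Fin 2) (Fin 2) ℂ) (x t : ℝ) :
    Matrix (Fin 2) (Fin 2) ℂ :=
  Matrix.of fun i j => deriv (fun u => F u t i j) x

/-- Entrywise partial derivative in `t` of a matrix-valued function. -/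
noncomputable def mpdt (F : ℝ → ℝ → Matrix (Fin 2) (Fin 2) ℂ) (x t : ℝ) :
    Matrix (Fin 2) (Fin 2) ℂ :=
  Matrix.of fun i j => deriv (fun u => F x u i j) t

/-- `B₁(λ) = λ²·diag(1,-1) + λ·[[0,-2q],[2r,0]] + diag(2qr,-2qr)`. -/
noncomputable def B1mat (q r : ℝ → ℝ → ℂ) (l : ℂ) (x t : ℝ) : Matrix (Fin 2) (Fin 2) ℂ :=
  !![l^2 + 2 * q x t * r x t, -2 * l * q x t;
     2 * l * r x t, -l^2 - 2 * q x t * r x t]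

/-- `B₂(λ) = λ⁴·diag(1,-1) + λ³·[[0,-2q],[2r,0]] + λ²·diag(2qr,-2qr)
  + λ·[[0,-q'],[-r',0]] + diag(q'r - qr' - 2q²r², -(q'r - qr' - 2q²r²))`. -/
noncomputable def B2mat (q r : ℝ → ℝ → ℂ) (l : ℂ) (x t : ℝ) : Matrix (Fin 2) (Fin 2) ℂ :=
  !![l^4 + 2 * l^2 * q x t * r x t
       + (pdx q x t * r x t - q x t * pdx r x t - 2 * (q x t)^2 * (r x t)^2),
     -2 * l^3 * q x t - l * pdx q x t;
     2 * l^3 * r x t - l * pdx r x t,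
     -l^4 - 2 * l^2 * q x t * r x t
       - (pdx q x t * r x t - q x t * pdx r x t - 2 * (q x t)^2 * (r x t)^2)]

lemma pdx_eq_fderiv (f : ℝ → ℝ → ℂ)
    (hf : ContDiff ℝ (⊤ : ℕ∞) fun p : ℝ × ℝ => f p.1 p.2) (x t : ℝ) :
    pdx f x t = fderiv ℝ (fun p : ℝ × ℝ => f p.1 p.2) (x, t) (1, 0) := by
  have h1 : HasDerivAt (fun u : ℝ => (u, t)) ((1 : ℝ), (0 : ℝ)) x :=
    HasDerivAt.prodMk (hasDerivAt_id x) (hasDerivAt_const x t)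
  have h2 := ((hf.differentiable (by simp) (x, t)).hasFDerivAt).comp_hasDerivAt x h1
  exact h2.deriv

lemma hasDerivAt_pdx (f : ℝ → ℝ → ℂ)
    (hf : ContDiff ℝ (⊤ : ℕ∞) fun p : ℝ × ℝ => f p.1 p.2) (x t : ℝ) :
    HasDerivAt (fun u => f u t) (pdx f x t) x := by
  have h1 : HasDerivAt (fun u : ℝ => (u, t)) ((1 : ℝ), (0 : ℝ)) x :=
    HasDerivAt.prodMk (hasDerivAt_id x) (hasDerivAt_const x t)
  have h2 := ((hf.differentiable (by simp) (x, t)).hasFDerivAt).comp_hasDerivAt x h1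
  rw [pdx_eq_fderiv f hf]
  exact h2

lemma hasDerivAt_pdt (f : ℝ → ℝ → ℂ)
    (hf : ContDiff ℝ (⊤ : ℕ∞) fun p : ℝ × ℝ => f p.1 p.2) (x t : ℝ) :
    HasDerivAt (fun u => f x u) (pdt f x t) t := by
  have h1 : HasDerivAt (fun u : ℝ => (x, u)) ((0 : ℝ), (1 : ℝ)) t :=
    HasDerivAt.prodMk (hasDerivAt_const t x) (hasDerivAt_id t)
  have h2 := ((hf.differentiable (by simp) (x, t)).hasFDerivAt).comp_hasDerivAt t h1
  have : pdt f x t = fderiv ℝ (fun p : ℝ × ℝ => f p.1 p.2) (x, t) (0, 1) := h2.deriv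
  rw [this]
  exact h2

lemma contDiff_pdx (f : ℝ → ℝ → ℂ)
    (hf : ContDiff ℝ (⊤ : ℕ∞) fun p : ℝ × ℝ => f p.1 p.2) :
    ContDiff ℝ (⊤ : ℕ∞) fun p : ℝ × ℝ => pdx f p.1 p.2 := by
  have h : (fun p : ℝ × ℝ => pdx f p.1 p.2) =
      fun p : ℝ × ℝ => fderiv ℝ (fun p : ℝ × ℝ => f p.1 p.2) p (1, 0) := by
    funext p; exact pdx_eq_fderiv f hf p.1 p.2
  rw [h]
  exact (hf.fderiv_right (by simp)).clm_apply contDiff_const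

lemma mpdt_B1 (q r : ℝ → ℝ → ℂ)
    (hq : ContDiff ℝ (⊤ : ℕ∞) fun p : ℝ × ℝ => q p.1 p.2)
    (hr : ContDiff ℝ (⊤ : ℕ∞) fun p : ℝ × ℝ => r p.1 p.2) (l : ℂ) (x t : ℝ) :
    mpdt (fun a b => B1mat q r l a b) x t =
      !![2 * pdt q x t * r x t + 2 * q x t * pdt r x t, -2 * l * pdt q x t;
         2 * l * pdt r x t, -(2 * pdt q x t * r x t + 2 * q x t * pdt r x t)] := by
  have hqt := hasDerivAt_pdt q hq x t
  have hrt := hasDerivAt_pdt r hr x t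
  ext i j
  fin_cases i <;> fin_cases j <;>
    simp only [mpdt, Matrix.of_apply, B1mat, Matrix.cons_val', Matrix.cons_val_zero,
      Matrix.cons_val_one, Matrix.head_cons, Matrix.empty_val', Matrix.cons_val_fin_one,
      Matrix.head_fin_const]
  · exact (((hqt.const_mul 2).mul hrt).const_add (l^2)).deriv
  · exact (hqt.const_mul (-2 * l)).deriv
  · exact (hrt.const_mul (2 * l)).deriv
  · exact (((hqt.const_mul 2).mul hrt).const_sub (-l^2)).deriv

lemma mpdx_B2 (q r : ℝ → ℝ → ℂ)
    (hq : ContDiff ℝ (⊤ : ℕ∞) fun p : ℝ × ℝ => q p.1 p.2)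
    (hr : ContDiff ℝ (⊤ : ℕ∞) fun p : ℝ × ℝ => r p.1 p.2) (l : ℂ) (x t : ℝ) :
    mpdx (fun a b => B2mat q r l a b) x t =
      !![2 * l^2 * pdx q x t * r x t + 2 * l^2 * q x t * pdx r x t
           + (pdx (pdx q) x t * r x t - q x t * pdx (pdx r) x t
              - 4 * q x t * pdx q x t * (r x t)^2 - 4 * (q x t)^2 * r x t * pdx r x t),
         -2 * l^3 * pdx q x t - l * pdx (pdx q) x t;
         2 * l^3 * pdx r x t - l * pdx (pdx r) x t,
         -(2 * l^2 * pdx q x t * r x t + 2 * l^2 * q x t * pdx r x t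
           + (pdx (pdx q) x t * r x t - q x t * pdx (pdx r) x t
              - 4 * q x t * pdx q x t * (r x t)^2 - 4 * (q x t)^2 * r x t * pdx r x t))] := by
  have hqx := hasDerivAt_pdx q hq x t
  have hrx := hasDerivAt_pdx r hr x t
  have hqxx := hasDerivAt_pdx (pdx q) (contDiff_pdx q hq) x t
  have hrxx := hasDerivAt_pdx (pdx r) (contDiff_pdx r hr) x t
  have hq2 : HasDerivAt (fun u => (q u t)^2) (2 * q x t * pdx q x t) x := by
    have h := hqx.mul hqx
    exact (h.congr_deriv (g' := 2 * q x t * pdx q x t) (by ring)).congr_of_eventuallyEq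
      (Filter.Eventually.of_forall fun u => sq _)
  have hr2 : HasDerivAt (fun u => (r u t)^2) (2 * r x t * pdx r x t) x := by
    have h := hrx.mul hrx
    exact (h.congr_deriv (g' := 2 * r x t * pdx r x t) (by ring)).congr_of_eventuallyEq
      (Filter.Eventually.of_forall fun u => sq _)
  have hS : HasDerivAt
      (fun u => pdx q u t * r u t - q u t * pdx r u t - 2 * (q u t)^2 * (r u t)^2)
      (pdx (pdx q) x t * r x t - q x t * pdx (pdx r) x t
        - 4 * q x t * pdx q x t * (r x t)^2 - 4 * (q x t)^2 * r x t * pdx r x t) x := by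
    have h := ((hqxx.mul hrx).sub (hqx.mul hrxx)).sub ((hq2.const_mul 2).mul hr2)
    exact h.congr_deriv (by ring)
  ext i j
  fin_cases i <;> fin_cases j <;>
    simp only [mpdx, Matrix.of_apply, B2mat, Matrix.cons_val', Matrix.cons_val_zero,
      Matrix.cons_val_one, Matrix.head_cons, Matrix.empty_val', Matrix.cons_val_fin_one,
      Matrix.head_fin_const]
  · exact ((((hqx.const_mul (2 * l^2)).mul hrx).const_add (l^4)).add hS).deriv
  · exact ((hqx.const_mul (-2 * l^3)).sub (hqxx.const_mul l)).deriv
  · exact ((hrx.const_mul (2 * l^3)).sub (hrxx.const_mul l)).deriv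
  · have h : HasDerivAt
        (fun u => -l^4 - 2 * l^2 * q u t * r u t
          - (pdx q u t * r u t - q u t * pdx r u t - 2 * (q u t)^2 * (r u t)^2))
        (-(2 * l^2 * pdx q x t * r x t + 2 * l^2 * q x t * pdx r x t
           + (pdx (pdx q) x t * r x t - q x t * pdx (pdx r) x t
              - 4 * q x t * pdx q x t * (r x t)^2
              - 4 * (q x t)^2 * r x t * pdx r x t))) x := by
      have h := ((((hqx.const_mul (2 * l^2)).mul hrx).const_sub (-l^4)).sub hS)
      exact h.congr_deriv (by ring)
    exact h.deriv

lemma key_residual (q r : ℝ → ℝ → ℂ)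
    (hq : ContDiff ℝ (⊤ : ℕ∞) fun p : ℝ × ℝ => q p.1 p.2)
    (hr : ContDiff ℝ (⊤ : ℕ∞) fun p : ℝ × ℝ => r p.1 p.2) (l : ℂ) (x t : ℝ) :
    mpdt (fun a b => B1mat q r l a b) x t - mpdx (fun a b => B2mat q r l a b) x t
      + (B1mat q r l x t * B2mat q r l x t - B2mat q r l x t * B1mat q r l x t) =
    !![2 * pdt q x t * r x t + 2 * q x t * pdt r x t
         - (pdx (pdx q) x t * r x t - q x t * pdx (pdx r) x t
            - 4 * q x t * pdx q x t * (r x t)^2 - 4 * (q x t)^2 * r x t * pdx r x t),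
       l * (-2 * pdt q x t + pdx (pdx q) x t - 4 * (q x t)^2 * pdx r x t
            - 8 * (q x t)^3 * (r x t)^2);
       l * (2 * pdt r x t + pdx (pdx r) x t + 4 * (r x t)^2 * pdx q x t
            - 8 * (q x t)^2 * (r x t)^3),
       -(2 * pdt q x t * r x t + 2 * q x t * pdt r x t
         - (pdx (pdx q) x t * r x t - q x t * pdx (pdx r) x t
            - 4 * q x t * pdx q x t * (r x t)^2 - 4 * (q x t)^2 * r x t * pdx r x t))] := by
  rw [mpdt_B1 q r hq hr l x t, mpdx_B2 q r hq hr l x t]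
  simp only [B1mat, B2mat, Matrix.mul_fin_two]
  ext i j
  fin_cases i <;> fin_cases j <;>
    simp only [Fin.zero_eta, Fin.mk_one, Matrix.sub_apply, Matrix.add_apply, Matrix.cons_val',
      Matrix.cons_val_zero, Matrix.cons_val_one, Matrix.head_cons, Matrix.empty_val',
      Matrix.cons_val_fin_one, Matrix.head_fin_const, Matrix.of_apply] <;>
    ring

/-- The zero-curvature equation `∂B₁/∂t - ∂B₂/∂x + [B₁,B₂] = 0` holds for all λ
iff `q, r` satisfy the ∂NLS system. -/
theorem zero_curvature_iff_dNLS (q r : ℝ → ℝ → ℂ)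
    (hq : ContDiff ℝ (⊤ : ℕ∞) fun p : ℝ × ℝ => q p.1 p.2)
    (hr : ContDiff ℝ (⊤ : ℕ∞) fun p : ℝ × ℝ => r p.1 p.2) :
    (∀ (l : ℂ) (x t : ℝ),
        mpdt (fun a b => B1mat q r l a b) x t - mpdx (fun a b => B2mat q r l a b) x t
          + (B1mat q r l x t * B2mat q r l x t - B2mat q r l x t * B1mat q r l x t) = 0)
    ↔ (∀ x t : ℝ,
        pdt q x t = (1/2) * pdx (fun a b => pdx q a b) x t
          - 2 * (q x t)^2 * pdx r x t - 4 * (q x t)^3 * (r x t)^2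
        ∧ pdt r x t = -(1/2) * pdx (fun a b => pdx r a b) x t
          - 2 * (r x t)^2 * pdx q x t + 4 * (r x t)^3 * (q x t)^2) := by
  have heq : (fun a b => pdx q a b) = pdx q := rfl
  have her : (fun a b => pdx r a b) = pdx r := rfl
  constructor
  · intro h x t
    have h1 := h 1 x t
    rw [key_residual q r hq hr 1 x t] at h1
    have e01 := congrFun (congrFun h1 0) 1
    have e10 := congrFun (congrFun h1 1) 0
    simp only [Matrix.cons_val', Matrix.cons_val_zero, Matrix.cons_val_one, Matrix.head_cons,
      Matrix.empty_val', Matrix.cons_val_fin_one, Matrix.head_fin_const, Matrix.zero_apply,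
      Matrix.of_apply] at e01 e10
    rw [heq, her]
    constructor
    · linear_combination (-1/2 : ℂ) * e01
    · linear_combination (1/2 : ℂ) * e10
  · intro h l x t
    rw [key_residual q r hq hr l x t]
    obtain ⟨h1, h2⟩ := h x t
    rw [heq] at h1
    rw [her] at h2
    ext i j
    fin_cases i <;> fin_cases j <;>
      simp only [Fin.zero_eta, Fin.mk_one, Matrix.cons_val', Matrix.cons_val_zero,
        Matrix.cons_val_one, Matrix.head_cons, Matrix.empty_val', Matrix.cons_val_fin_one,
        Matrix.head_fin_const, Matrix.zero_apply, Matrix.of_apply]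
    · linear_combination (2 * r x t) * h1 + (2 * q x t) * h2
    · linear_combination (-2 * l) * h1
    · linear_combination (2 * l) * h2
    · linear_combination (-2 * r x t) * h1 + (-2 * q x t) * h2
end

section
/- Let c ∈ ℂ, and suppose (q, r, φ) satisfy φ_x = 2qr, φ_t = q_x r - q r_x - 2q²r², together with the ∂NLS system q_t = (1/2)q_xx - 2q²r_x - 4q³r², r_t = -(1/2)r_xx - 2r²q_x + 4r³q². Define Q = q·e^{-cφ}, R = r·e^{cφ}. Then Q, R satisfy the generalized derivative NLS system Q_t = (1/2)Q_xx + 2c QRQ_x + 2(c-1)Q²R_x - 2(c-1)(c-2)Q³R² and R_t = -(1/2)R_xx + 2c QRR_x + 2(c-1)R²Q_x + 2(c-1)(c-2)Q²R³. -/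
private lemma aux_diff {f : ℝ → ℂ} (h : ContDiff ℝ (⊤ : ℕ∞) f) :
    Differentiable ℝ f ∧ Differentiable ℝ (deriv f) := by
  have h2 : ContDiff ℝ ((⊤:ℕ∞) : WithTop ℕ∞) f := h.of_le (by simp)
  obtain ⟨h3, h4⟩ := contDiff_infty_iff_deriv.mp h2
  exact ⟨h3, (contDiff_infty_iff_deriv.mp h4).1⟩

private lemma aux_mul_exp {f g : ℝ → ℂ} {c f' g' : ℂ} {x : ℝ}
    (hf : HasDerivAt f f' x) (hg : HasDerivAt g g' x) :
    HasDerivAt (fun u => f u * Complex.exp (c * g u))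
      ((f' + c * g' * f x) * Complex.exp (c * g x)) x := by
  have h1 : HasDerivAt (fun u => Complex.exp (c * g u))
      (Complex.exp (c * g x) * (c * g')) x := (hg.const_mul c).cexp
  have h2 : HasDerivAt (fun u => f u * Complex.exp (c * g u))
      (f' * Complex.exp (c * g x) + f x * (Complex.exp (c * g x) * (c * g'))) x := hf.mul h1
  convert h2 using 1; ring

/-- Gauge transformation of the ∂NLS system to the generalized derivative NLS
system of Kundu: with `φ_x = 2qr`, `φ_t = q_x r - q r_x - 2q²r²` and
`Q = q e^{-cφ}`, `R = r e^{cφ}`, the pair `(Q,R)` satisfies the generalized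
∂NLS system with parameter `c`. -/
theorem gauge_to_generalized_dNLS (c : ℂ) (q r φ Q R : ℝ → ℝ → ℂ)
    (hq : ContDiff ℝ (⊤ : ℕ∞) fun p : ℝ × ℝ => q p.1 p.2)
    (hr : ContDiff ℝ (⊤ : ℕ∞) fun p : ℝ × ℝ => r p.1 p.2)
    (hφ : ContDiff ℝ (⊤ : ℕ∞) fun p : ℝ × ℝ => φ p.1 p.2)
    (hφx : ∀ x t, pdx φ x t = 2 * q x t * r x t)
    (hφt : ∀ x t, pdt φ x t = pdx q x t * r x t - q x t * pdx r x t
        - 2 * (q x t)^2 * (r x t)^2)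
    (hsys1 : ∀ x t, pdt q x t = (1/2) * pdx (fun a b => pdx q a b) x t
        - 2 * (q x t)^2 * pdx r x t - 4 * (q x t)^3 * (r x t)^2)
    (hsys2 : ∀ x t, pdt r x t = -(1/2) * pdx (fun a b => pdx r a b) x t
        - 2 * (r x t)^2 * pdx q x t + 4 * (r x t)^3 * (q x t)^2)
    (hQ : ∀ x t, Q x t = q x t * Complex.exp (-c * φ x t))
    (hR : ∀ x t, R x t = r x t * Complex.exp (c * φ x t)) :
    ∀ x t : ℝ,
      pdt Q x t = (1/2) * pdx (fun a b => pdx Q a b) x t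
        + 2 * c * Q x t * R x t * pdx Q x t
        + 2 * (c - 1) * (Q x t)^2 * pdx R x t
        - 2 * (c - 1) * (c - 2) * (Q x t)^3 * (R x t)^2
      ∧ pdt R x t = -(1/2) * pdx (fun a b => pdx R a b) x t
        + 2 * c * Q x t * R x t * pdx R x t
        + 2 * (c - 1) * (R x t)^2 * pdx Q x t
        + 2 * (c - 1) * (c - 2) * (Q x t)^2 * (R x t)^3 := by
  intro x t
  -- one-variable restrictions
  have hline1 : ∀ s : ℝ, ContDiff ℝ (⊤ : ℕ∞) (fun u : ℝ => (u, s)) := fun s =>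
    contDiff_id.prodMk contDiff_const
  have hline2 : ContDiff ℝ (⊤ : ℕ∞) (fun s : ℝ => (x, s)) := contDiff_const.prodMk contDiff_id
  have hq1 := aux_diff (hq.comp (hline1 t))
  have hr1 := aux_diff (hr.comp (hline1 t))
  have hφ1 := aux_diff (hφ.comp (hline1 t))
  have hq2 := aux_diff (hq.comp hline2)
  have hφ2 := aux_diff (hφ.comp hline2)
  have hr2 := aux_diff (hr.comp hline2)
  -- x-direction HasDerivAt facts (at arbitrary point u, fixed t)
  have hq' : ∀ u : ℝ, HasDerivAt (fun v => q v t) (pdx q u t) u := fun u =>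
    (hq1.1 u).hasDerivAt
  have hr' : ∀ u : ℝ, HasDerivAt (fun v => r v t) (pdx r u t) u := fun u =>
    (hr1.1 u).hasDerivAt
  have hφ' : ∀ u : ℝ, HasDerivAt (fun v => φ v t) (pdx φ u t) u := fun u =>
    (hφ1.1 u).hasDerivAt
  have hqx' : HasDerivAt (fun u => pdx q u t) (pdx (fun a b => pdx q a b) x t) x :=
    (hq1.2 x).hasDerivAt
  have hrx' : HasDerivAt (fun u => pdx r u t) (pdx (fun a b => pdx r a b) x t) x :=
    (hr1.2 x).hasDerivAt
  -- t-direction HasDerivAt at (x,t)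
  have hqt' : HasDerivAt (fun s => q x s) (pdt q x t) t := (hq2.1 t).hasDerivAt
  have hrt' : HasDerivAt (fun s => r x s) (pdt r x t) t := (hr2.1 t).hasDerivAt
  have hφt' : HasDerivAt (fun s => φ x s) (pdt φ x t) t := (hφ2.1 t).hasDerivAt
  -- first x-derivatives of Q and R, at every point u (fixed t)
  have hQx : ∀ u : ℝ, pdx Q u t
      = (pdx q u t - 2*c*(q u t * q u t * r u t)) * Complex.exp (-c * φ u t) := by
    intro u
    have h := aux_mul_exp (c := -c) (hq' u) (hφ' u)
    have heq : (fun v => Q v t) = fun v => q v t * Complex.exp (-c * φ v t) :=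
      funext fun v => hQ v t
    show deriv (fun v => Q v t) u = _
    rw [heq, h.deriv, hφx u t]; ring
  have hRx : ∀ u : ℝ, pdx R u t
      = (pdx r u t + 2*c*(r u t * r u t * q u t)) * Complex.exp (c * φ u t) := by
    intro u
    have h := aux_mul_exp (c := c) (hr' u) (hφ' u)
    have heq : (fun v => R v t) = fun v => r v t * Complex.exp (c * φ v t) :=
      funext fun v => hR v t
    show deriv (fun v => R v t) u = _
    rw [heq, h.deriv, hφx u t]; ring
  -- t-derivatives of Q and R at (x,t)
  have hQt : pdt Q x t
      = (pdt q x t + (-c) * pdt φ x t * q x t) * Complex.exp (-c * φ x t) := by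
    have h := aux_mul_exp (c := -c) hqt' hφt'
    have heq : (fun s => Q x s) = fun s => q x s * Complex.exp (-c * φ x s) :=
      funext fun s => hQ x s
    show deriv (fun s => Q x s) t = _
    rw [heq, h.deriv]
  have hRt : pdt R x t
      = (pdt r x t + c * pdt φ x t * r x t) * Complex.exp (c * φ x t) := by
    have h := aux_mul_exp (c := c) hrt' hφt'
    have heq : (fun s => R x s) = fun s => r x s * Complex.exp (c * φ x s) :=
      funext fun s => hR x s
    show deriv (fun s => R x s) t = _
    rw [heq, h.deriv]
  -- second x-derivatives
  have hGq : HasDerivAt (fun u => pdx q u t - 2*c*(q u t * q u t * r u t))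
      (pdx (fun a b => pdx q a b) x t
        - 2*c*((pdx q x t * q x t + q x t * pdx q x t) * r x t + q x t * q x t * pdx r x t)) x := by
    have h1 := ((((hq' x).mul (hq' x)).mul (hr' x))).const_mul (2*c)
    have h2 := hqx'.sub h1
    exact h2
  have hGr : HasDerivAt (fun u => pdx r u t + 2*c*(r u t * r u t * q u t))
      (pdx (fun a b => pdx r a b) x t
        + 2*c*((pdx r x t * r x t + r x t * pdx r x t) * q x t + r x t * r x t * pdx q x t)) x := by
    have h1 := ((((hr' x).mul (hr' x)).mul (hq' x))).const_mul (2*c)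
    have h2 := hrx'.add h1
    exact h2
  have hQxx : pdx (fun a b => pdx Q a b) x t
      = ((pdx (fun a b => pdx q a b) x t
        - 2*c*((pdx q x t * q x t + q x t * pdx q x t) * r x t + q x t * q x t * pdx r x t))
        + (-c) * (2 * q x t * r x t) * (pdx q x t - 2*c*(q x t * q x t * r x t)))
        * Complex.exp (-c * φ x t) := by
    have h := aux_mul_exp (c := -c) hGq (hφ' x)
    have heq : (fun u => pdx Q u t)
        = fun u => (pdx q u t - 2*c*(q u t * q u t * r u t)) * Complex.exp (-c * φ u t) :=
      funext fun u => hQx u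
    show deriv (fun u => pdx Q u t) x = _
    rw [heq, h.deriv, hφx x t]
  have hRxx : pdx (fun a b => pdx R a b) x t
      = ((pdx (fun a b => pdx r a b) x t
        + 2*c*((pdx r x t * r x t + r x t * pdx r x t) * q x t + r x t * r x t * pdx q x t))
        + c * (2 * q x t * r x t) * (pdx r x t + 2*c*(r x t * r x t * q x t)))
        * Complex.exp (c * φ x t) := by
    have h := aux_mul_exp (c := c) hGr (hφ' x)
    have heq : (fun u => pdx R u t)
        = fun u => (pdx r u t + 2*c*(r u t * r u t * q u t)) * Complex.exp (c * φ u t) :=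
      funext fun u => hRx u
    show deriv (fun u => pdx R u t) x = _
    rw [heq, h.deriv, hφx x t]
  -- assemble
  have he : Complex.exp (c * φ x t) = (Complex.exp (-c * φ x t))⁻¹ := by
    rw [neg_mul, Complex.exp_neg, inv_inv]
  have hne : Complex.exp (-c * φ x t) ≠ 0 := Complex.exp_ne_zero _
  constructor
  · rw [hQt, hQxx, hQx x, hRx x, hQ, hR, hsys1, hφt, he]
    field_simp [hne]
    ring
  · have he2 : Complex.exp (-c * φ x t) = (Complex.exp (c * φ x t))⁻¹ := by
      rw [neg_mul, Complex.exp_neg]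
    have hne2 : Complex.exp (c * φ x t) ≠ 0 := Complex.exp_ne_zero _
    rw [hRt, hRxx, hQx x, hRx x, hQ, hR, hsys2, hφt, he2]
    field_simp [hne2]
    ring
end

section
/- Let α, β ∈ ℂ and suppose φ, ψ₁, ψ₀ are smooth functions of x satisfying φ' = -φ(ψ₁ + ψ₀), ψ₁' = ψ₁(2φ + ψ₁ + 2x) - 4β, ψ₀' = ψ₀(-2φ + ψ₀ - 2x) - 2(2β - 1), together with the constraint ψ₀ - ψ₁ - φ + 2(α+β)/φ = 2x. Then y = φ satisfies the fourth Painlevé equation y'' = (y')²/(2y) + (3/2)y³ + 4xy² + 2(x² - ν₁)y + ν₂/y with ν₁ = α - 3β + 1 and ν₂ = -2(α+β)². -/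
/-! Differentiating `φ' = -φ(ψ₁ + ψ₀)` once more and inserting the equations for `ψ₁'` and `ψ₀'`
writes `φ''` as a polynomial in `φ, ψ₁, ψ₀, x`. Its difference from the right-hand side of `P_IV`
(with `φ' = -φ(ψ₁ + ψ₀)` there too) is, after clearing denominators, a polynomial multiple of the
constraint. -/

theorem deriv_deriv_of_deriv_eq_neg_mul {𝕜 𝔸 : Type*} [NontriviallyNormedField 𝕜] [NormedRing 𝔸]
    [NormedAlgebra 𝕜 𝔸] {f g : 𝕜 → 𝔸} {x : 𝕜} (hf : DifferentiableAt 𝕜 f x)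
    (hg : DifferentiableAt 𝕜 g x) (h : ∀ y, deriv f y = -f y * g y) :
    deriv (deriv f) x = -deriv f x * g x - f x * deriv g x := by
  have hfg : HasDerivAt (fun y => -f y * g y) (-deriv f x * g x + -f x * deriv g x) x :=
    hf.hasDerivAt.neg.mul hg.hasDerivAt
  conv_lhs => rw [funext h]
  rw [hfg.deriv, neg_mul (f x), ← sub_eq_add_neg]

theorem painleveIV_of_reduction {K : Type*} [Field K] [NeZero (2 : K)] (α β x φ ψ1 ψ0 : K)
    (hφ : φ ≠ 0) (hc : ψ0 - ψ1 - φ + 2 * (α + β) / φ = 2 * x) :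
    -(-φ * (ψ1 + ψ0)) * (ψ1 + ψ0) - φ * ((ψ1 * (2 * φ + ψ1 + 2 * x) - 4 * β)
        + (ψ0 * (-2 * φ + ψ0 - 2 * x) - 2 * (2 * β - 1))) =
      (-φ * (ψ1 + ψ0)) ^ 2 / (2 * φ) + (3 / 2) * φ ^ 3 + 4 * x * φ ^ 2
        + 2 * (x ^ 2 - (α - 3 * β + 1)) * φ + (-2 * (α + β) ^ 2) / φ := by
  field_simp at hc ⊢
  linear_combination (2 * φ * x - φ * ψ0 + φ * ψ1 + 3 * φ ^ 2 + 2 * β + 2 * α) * hc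

/-- Similarity reduction of the ∂NLS hierarchy: under the system
`φ' = -φ(ψ₁+ψ₀)`, `ψ₁' = ψ₁(2φ+ψ₁+2x) - 4β`, `ψ₀' = ψ₀(-2φ+ψ₀-2x) - 2(2β-1)`
with the constraint `ψ₀ - ψ₁ - φ + 2(α+β)/φ = 2x`, the function `y = φ`
satisfies the fourth Painlevé equation with `ν₁ = α - 3β + 1`,
`ν₂ = -2(α+β)²`. -/
theorem phi_solves_PIV (α β : ℂ) (φ ψ1 ψ0 : ℝ → ℂ)
    (hφ : Differentiable ℝ φ) (hψ1 : Differentiable ℝ ψ1)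
    (hψ0 : Differentiable ℝ ψ0)
    (hφne : ∀ x, φ x ≠ 0)
    (e1 : ∀ x : ℝ, deriv φ x = -φ x * (ψ1 x + ψ0 x))
    (e2 : ∀ x : ℝ, deriv ψ1 x = ψ1 x * (2 * φ x + ψ1 x + 2 * (x : ℂ)) - 4 * β)
    (e3 : ∀ x : ℝ, deriv ψ0 x = ψ0 x * (-2 * φ x + ψ0 x - 2 * (x : ℂ))
        - 2 * (2 * β - 1))
    (e4 : ∀ x : ℝ, ψ0 x - ψ1 x - φ x + 2 * (α + β) / φ x = 2 * (x : ℂ)) :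
    ∀ x : ℝ,
      deriv (deriv φ) x =
        (deriv φ x)^2 / (2 * φ x) + (3/2) * (φ x)^3 + 4 * (x : ℂ) * (φ x)^2
          + 2 * ((x : ℂ)^2 - (α - 3 * β + 1)) * φ x + (-2 * (α + β)^2) / φ x := by
  intro x
  rw [deriv_deriv_of_deriv_eq_neg_mul (g := ψ1 + ψ0) (hφ x) (hψ1.add hψ0 x) e1,
    deriv_add (hψ1 x) (hψ0 x), e1, e2, e3]
  exact painleveIV_of_reduction α β x (φ x) (ψ1 x) (ψ0 x) (hφne x) (e4 x)
end
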